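/- Second robustness of the augmented functional: if the true outcome mean g_{s,a}(X) = E[Y | X, S=s, A=a] is used but arbitrary (possibly incorrect) functions p*(X) and e*_{s,a}(X) (bounded away from 0 and 1 appropriately) replace the true propensity functions in the weight, the population value of (1/ζ)·E[ I(S=1)·g_{s,a}(X) + w*_{s,a}(X,S,A)·(Y − g_{s,a}(X)) ] still equals γ_{s,a}, where w*_{s,a} uses p* and e*_{s,a} in place of the true functions. -/

import Mathlib

open scoped Classical BigOperators
open Finset

noncomputable section

/-- Indicator of a proposition. -/
def ind (P : Prop) : ℝ := if P then 1 else 0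

/-- Expectation with respect to weights `p` on a finite outcome space. -/
def pexp {Ω : Type*} [Fintype Ω] (p : Ω → ℝ) (f : Ω → ℝ) : ℝ := ∑ ω, p ω * f ω

/-- Probability of an event. -/
def prob {Ω : Type*} [Fintype Ω] (p : Ω → ℝ) (B : Ω → Prop) : ℝ :=
  pexp p (fun ω => ind (B ω))

/-- Conditional expectation of `f` given event `B`. -/
def cexp {Ω : Type*} [Fintype Ω] (p : Ω → ℝ) (f : Ω → ℝ) (B : Ω → Prop) : ℝ :=
  pexp p (fun ω => f ω * ind (B ω)) / prob p B

/-- Conditional probability of `B` given `C`. -/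
def cprob {Ω : Type*} [Fintype Ω] (p : Ω → ℝ) (B C : Ω → Prop) : ℝ :=
  prob p (fun ω => B ω ∧ C ω) / prob p C

/-- Conditional outcome mean `g_{s,a}(x) = E[Y | X = x, S = s, A = a]`. -/
def gfun {Ω 𝒳 : Type*} [Fintype Ω] (p : Ω → ℝ) (X : Ω → 𝒳) (S A : Ω → ℕ)
    (Y : Ω → ℝ) (s a : ℕ) (x : 𝒳) : ℝ :=
  cexp p Y (fun ω => X ω = x ∧ S ω = s ∧ A ω = a)

/-- Standardized functional `γ_{s,a} = E[ E[Y | X, S=s, A=a] | S=1 ]`. -/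
def gam {Ω 𝒳 : Type*} [Fintype Ω] (p : Ω → ℝ) (X : Ω → 𝒳) (S A : Ω → ℕ)
    (Y : Ω → ℝ) (s a : ℕ) : ℝ :=
  cexp p (fun ω => gfun p X S A Y s a (X ω)) (fun ω => S ω = 1)

/-- Participation probability `p_s(x) = Pr[S = s | X = x]`. -/
def psel {Ω 𝒳 : Type*} [Fintype Ω] (p : Ω → ℝ) (X : Ω → 𝒳) (S : Ω → ℕ)
    (s : ℕ) (x : 𝒳) : ℝ :=
  cprob p (fun ω => S ω = s) (fun ω => X ω = x)

/-- Treatment probability `e_{s,a}(x) = Pr[A = a | X = x, S = s]`. -/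
def etrt {Ω 𝒳 : Type*} [Fintype Ω] (p : Ω → ℝ) (X : Ω → 𝒳) (S A : Ω → ℕ)
    (s a : ℕ) (x : 𝒳) : ℝ :=
  cprob p (fun ω => A ω = a) (fun ω => X ω = x ∧ S ω = s)

/-- Weight `w_{s,a}(X,S,A) = I(S=s, A=a) p_1(X) / (e_{s,a}(X) p_s(X))`. -/
def wgt {Ω 𝒳 : Type*} [Fintype Ω] (p : Ω → ℝ) (X : Ω → 𝒳) (S A : Ω → ℕ)
    (s a : ℕ) (ω : Ω) : ℝ :=
  ind (S ω = s ∧ A ω = a) * psel p X S 1 (X ω) /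
    (etrt p X S A s a (X ω) * psel p X S s (X ω))

/-- Influence function `Γ_{s,a}(O)`. -/
def Gam {Ω 𝒳 : Type*} [Fintype Ω] (p : Ω → ℝ) (X : Ω → 𝒳) (S A : Ω → ℕ)
    (Y : Ω → ℝ) (s a : ℕ) (ω : Ω) : ℝ :=
  (1 / prob p (fun ω' => S ω' = 1)) *
    (ind (S ω = 1) * (gfun p X S A Y s a (X ω) - gam p X S A Y s a)
      + wgt p X S A s a ω * (Y ω - gfun p X S A Y s a (X ω)))

/-- Variance of `f` under `p`. -/
def pvar {Ω : Type*} [Fintype Ω] (p : Ω → ℝ) (f : Ω → ℝ) : ℝ :=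
  pexp p (fun ω => (f ω - pexp p f) ^ 2)

/-
Only the outcome regression needs to be correct. Conditionally on `X = x`, the residual
`Y - g_{s,a}(x)` has mean zero on the event `{S = s, A = a}`, so it is orthogonal to every
function of `X`, and in particular to the misspecified weight `p*(X) / (e*_{s,a}(X) p*_s(X))`.
The augmentation term therefore has expectation zero, and what remains is
`E[I(S = 1) g_{s,a}(X)] / Pr[S = 1] = γ_{s,a}`.
-/

lemma ind_nonneg (P : Prop) : 0 ≤ ind P := by
  unfold ind; split_ifs <;> norm_num

lemma ind_and (P Q : Prop) : ind (P ∧ Q) = ind P * ind Q := by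
  by_cases hP : P <;> by_cases hQ : Q <;> simp [ind, hP, hQ]

section Expectation

variable {Ω : Type*} [Fintype Ω] (p : Ω → ℝ)

lemma pexp_add (f g : Ω → ℝ) :
    pexp p (fun ω => f ω + g ω) = pexp p f + pexp p g := by
  simp only [pexp, mul_add, Finset.sum_add_distrib]

lemma pexp_sub (f g : Ω → ℝ) :
    pexp p (fun ω => f ω - g ω) = pexp p f - pexp p g := by
  simp only [pexp, mul_sub, Finset.sum_sub_distrib]

lemma pexp_const_mul (c : ℝ) (f : Ω → ℝ) :
    pexp p (fun ω => c * f ω) = c * pexp p f := by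
  simp only [pexp, Finset.mul_sum, mul_left_comm]

lemma pexp_eq_sum_pexp_ind_eq {𝒳 : Type*} (X : Ω → 𝒳) (f : Ω → ℝ) :
    pexp p f = ∑ x ∈ Finset.univ.image X, pexp p (fun ω => ind (X ω = x) * f ω) := by
  simp only [pexp]
  rw [Finset.sum_comm]
  refine Finset.sum_congr rfl fun ω _ => ?_
  simp only [ind, ite_mul, one_mul, zero_mul, mul_ite, mul_zero]
  rw [Finset.sum_ite_eq, if_pos (Finset.mem_image_of_mem X (Finset.mem_univ ω))]

variable {p}

lemma pexp_mul_ind_eq_zero_of_prob_eq_zero (hp0 : ∀ ω, 0 ≤ p ω) {B : Ω → Prop}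
    (hB : prob p B = 0) (f : Ω → ℝ) : pexp p (fun ω => f ω * ind (B ω)) = 0 := by
  have hnull : ∀ ω ∈ Finset.univ, p ω * ind (B ω) = 0 :=
    (Finset.sum_eq_zero_iff_of_nonneg fun ω _ => mul_nonneg (hp0 ω) (ind_nonneg _)).mp hB
  refine Finset.sum_eq_zero fun ω hω => ?_
  rw [mul_left_comm, hnull ω hω, mul_zero]

-- Also for null events, where the division in `cexp` is junk.
lemma cexp_mul_prob (hp0 : ∀ ω, 0 ≤ p ω) (Y : Ω → ℝ) (B : Ω → Prop) :
    cexp p Y B * prob p B = pexp p (fun ω => Y ω * ind (B ω)) := by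
  by_cases hB : prob p B = 0
  · rw [hB, mul_zero, pexp_mul_ind_eq_zero_of_prob_eq_zero hp0 hB]
  · exact div_mul_cancel₀ _ hB

lemma pexp_ind_mul_sub_cexp (hp0 : ∀ ω, 0 ≤ p ω) (Y : Ω → ℝ) (B : Ω → Prop) :
    pexp p (fun ω => ind (B ω) * (Y ω - cexp p Y B)) = 0 := by
  have hsplit : (fun ω => ind (B ω) * (Y ω - cexp p Y B))
      = fun ω => Y ω * ind (B ω) - cexp p Y B * ind (B ω) := by
    funext ω; ring
  rw [hsplit, pexp_sub, pexp_const_mul, ← prob, cexp_mul_prob hp0, sub_self]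

lemma pexp_ind_mul_residual_gfun {𝒳 : Type*} (hp0 : ∀ ω, 0 ≤ p ω) (X : Ω → 𝒳)
    (S A : Ω → ℕ) (Y : Ω → ℝ) (s a : ℕ) (h : 𝒳 → ℝ) :
    pexp p (fun ω => ind (S ω = s ∧ A ω = a) * h (X ω) * (Y ω - gfun p X S A Y s a (X ω)))
      = 0 := by
  rw [pexp_eq_sum_pexp_ind_eq p X]
  refine Finset.sum_eq_zero fun x _ => ?_
  have hfiber : (fun ω => ind (X ω = x) *
        (ind (S ω = s ∧ A ω = a) * h (X ω) * (Y ω - gfun p X S A Y s a (X ω))))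
      = fun ω => h x * (ind (X ω = x ∧ S ω = s ∧ A ω = a) * (Y ω - gfun p X S A Y s a x)) := by
    funext ω
    by_cases hx : X ω = x
    · have hind : ind (X ω = x) = 1 := if_pos hx
      rw [ind_and (X ω = x), hind, hx]
      ring
    · simp [ind, hx]
  rw [hfiber, pexp_const_mul, gfun, pexp_ind_mul_sub_cexp hp0, mul_zero]

end Expectation

theorem statement7_general
    {Ω 𝒳 : Type*} [Fintype Ω] (p : Ω → ℝ)
    (hp0 : ∀ ω, 0 ≤ p ω)
    (X : Ω → 𝒳) (S A : Ω → ℕ) (Y : Ω → ℝ) (s a : ℕ) (pstar estar : 𝒳 → ℝ) :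
    (1 / prob p (fun ω => S ω = 1)) *
        pexp p (fun ω =>
          ind (S ω = 1) * gfun p X S A Y s a (X ω) +
            ind (S ω = s ∧ A ω = a) *
              (pstar (X ω) /
                (estar (X ω) * (if s = 1 then pstar (X ω) else 1 - pstar (X ω)))) *
              (Y ω - gfun p X S A Y s a (X ω))) =
      gam p X S A Y s a := by
  rw [pexp_add, pexp_ind_mul_residual_gfun hp0 X S A Y s a
    (fun x => pstar x / (estar x * (if s = 1 then pstar x else 1 - pstar x))), add_zero,
    gam, cexp, one_div_mul_eq_div]
  simp only [mul_comm]

theorem statement7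
    {Ω 𝒳 : Type*} [Fintype Ω] (p : Ω → ℝ)
    (hp0 : ∀ ω, 0 ≤ p ω) (hp1 : ∑ ω, p ω = 1)
    (X : Ω → 𝒳) (S A : Ω → ℕ) (Y : Ω → ℝ) (s a : ℕ) (pstar estar : 𝒳 → ℝ)
    (hpstar : ∀ x, 0 < pstar x ∧ pstar x < 1)
    (hestar : ∀ x, 0 < estar x ∧ estar x < 1)
    (hS : 0 < prob p (fun ω => S ω = 1))
    (hposS : ∀ x, 0 < prob p (fun ω => X ω = x ∧ S ω = 1) → 0 < psel p X S s x)
    (hposA : ∀ x, 0 < prob p (fun ω => X ω = x ∧ S ω = 1) → 0 < etrt p X S A s a x) :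
    (1 / prob p (fun ω => S ω = 1)) *
        pexp p (fun ω =>
          ind (S ω = 1) * gfun p X S A Y s a (X ω) +
            ind (S ω = s ∧ A ω = a) *
              (pstar (X ω) /
                (estar (X ω) * (if s = 1 then pstar (X ω) else 1 - pstar (X ω)))) *
              (Y ω - gfun p X S A Y s a (X ω))) =
      gam p X S A Y s a :=
  statement7_general p hp0 X S A Y s a pstar estar
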